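/- arXiv:0902.0620 — 4 statements merged into one kernel-verified Lean document; each statement's English description precedes it below -/
import Mathlib

section
/- For every n ≥ 3 there exists a proportional division scenario witnessing only n envy-free-relations: there exist valuations v_1,…,v_n (given as an n×n matrix of values v_i(C_j) with each row summing to 1 and all entries positive) such that v_i(C_i) = 1/n for all i, and for each i there is exactly one j ≠ i with v_i(C_j) < v_i(C_i), while v_i(C_k) > v_i(C_i) for all other k ∉ {i, j}. -/
/-!
Give player `i` the value `1/n` for its own piece, `2/n²` for the piece of one other player
`σ i`, and `(n+1)/n²` for each of the remaining `n-2` pieces. The row sums to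
`(n + 2 + (n-2)(n+1))/n² = 1`; player `i` envies everyone except `σ i` since `(n+1)/n² > 1/n`,
and does not envy `σ i` because `2/n² < 1/n` exactly when `n > 2`. On `Fin n` take `σ i = i + 1`.
-/

open Finset

namespace WorstCaseDivision

variable {ι : Type*} [Fintype ι]

lemma card_pos_real (i : ι) : (0 : ℝ) < Fintype.card ι := by
  have : Nonempty ι := ⟨i⟩
  exact_mod_cast Fintype.card_pos

variable [DecidableEq ι]

noncomputable def valuation (σ : ι → ι) (i j : ι) : ℝ :=
  if j = i then 1 / Fintype.card ι
  else if j = σ i then 2 / (Fintype.card ι : ℝ) ^ 2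
  else (Fintype.card ι + 1) / (Fintype.card ι : ℝ) ^ 2

variable (σ : ι → ι)

lemma valuation_pos (i j : ι) : 0 < valuation σ i j := by
  have := card_pos_real i
  unfold valuation
  split_ifs <;> positivity

@[simp]
lemma valuation_self (i : ι) : valuation σ i i = 1 / Fintype.card ι := if_pos rfl

lemma valuation_apply_of_ne (i : ι) (hσ : σ i ≠ i) :
    valuation σ i (σ i) = 2 / (Fintype.card ι : ℝ) ^ 2 := by
  simp [valuation, hσ]

lemma valuation_of_ne_of_ne {i k : ι} (hki : k ≠ i) (hkσ : k ≠ σ i) :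
    valuation σ i k = (Fintype.card ι + 1) / (Fintype.card ι : ℝ) ^ 2 := by
  simp [valuation, hki, hkσ]

lemma sum_valuation (i : ι) (hσ : σ i ≠ i) : ∑ j, valuation σ i j = 1 := by
  set rest := (univ.erase i).erase (σ i)
  have hcard : (Fintype.card ι : ℝ) = #rest + 2 := by
    rw [← card_univ, ← card_erase_add_one (mem_univ i),
      ← card_erase_add_one (mem_erase.2 ⟨hσ, mem_univ _⟩)]
    push_cast
    ring
  have hrest : ∑ k ∈ rest, valuation σ i k = #rest * ((#rest + 3) / ((#rest : ℝ) + 2) ^ 2) := by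
    rw [← nsmul_eq_mul, ← sum_const]
    refine sum_congr rfl fun k hk => ?_
    obtain ⟨hkσ, hki⟩ := mem_erase.1 hk
    rw [valuation_of_ne_of_ne σ (ne_of_mem_erase hki) hkσ, hcard]
    ring
  rw [← add_sum_erase _ _ (mem_univ i), ← add_sum_erase _ _ (mem_erase.2 ⟨hσ, mem_univ _⟩),
    hrest, valuation_self, valuation_apply_of_ne σ i hσ, hcard]
  field_simp
  ring

lemma valuation_apply_lt_self (i : ι) (hσ : σ i ≠ i) (hcard : 2 < Fintype.card ι) :
    valuation σ i (σ i) < valuation σ i i := by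
  have hn : (2 : ℝ) < Fintype.card ι := by exact_mod_cast hcard
  rw [valuation_apply_of_ne σ i hσ, valuation_self, div_lt_div_iff₀ (by positivity) (by positivity)]
  nlinarith

lemma valuation_self_lt {i k : ι} (hki : k ≠ i) (hkσ : k ≠ σ i) :
    valuation σ i i < valuation σ i k := by
  have hn := card_pos_real i
  rw [valuation_of_ne_of_ne σ hki hkσ, valuation_self, div_lt_div_iff₀ hn (by positivity)]
  nlinarith

end WorstCaseDivision

open WorstCaseDivision in
/-- For every n ≥ 3 there is a proportional division scenario
(given abstractly by a valuation matrix with positive entries and rows summing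
to 1) witnessing only n envy-free-relations: v_i(C_i) = 1/n, exactly one j ≠ i
with v_i(C_j) < v_i(C_i), and v_i(C_k) > v_i(C_i) for all other k. -/
theorem worst_case_proportional_division_exists (n : ℕ) (hn : 3 ≤ n) :
    ∃ a : Fin n → Fin n → ℝ,
      (∀ i j, 0 < a i j) ∧
      (∀ i, ∑ j, a i j = 1) ∧
      (∀ i, a i i = 1 / n) ∧
      (∀ i : Fin n, ∃ j : Fin n, j ≠ i ∧ a i j < a i i ∧
        ∀ k : Fin n, k ≠ i → k ≠ j → a i k > a i i) := by
  have : NeZero n := ⟨by omega⟩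
  have hσ (i : Fin n) : i + 1 ≠ i := add_ne_left.2 (Fin.one_eq_zero_iff.not.2 (by omega))
  have hcard : 2 < Fintype.card (Fin n) := by rw [Fintype.card_fin]; omega
  refine ⟨valuation (· + 1), valuation_pos _, fun i => sum_valuation _ i (hσ i),
    fun i => by simp, fun i => ⟨i + 1, hσ i, valuation_apply_lt_self _ i (hσ i) hcard,
      fun k hki hkσ => valuation_self_lt _ hki hkσ⟩⟩
end

section
/- Define d : ℕ → ℕ by d(1) = 0 and d(n) = d(⌊n/2⌋) + d(⌈n/2⌉) + n for n ≥ 2. Then for all n ≥ 1, d(n) = n·⌊log₂ n⌋ + 2n − 2^{⌊log₂ n⌋+1}. -/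
/-! The closed form `f n = n * ⌊log₂ n⌋ + 2n - 2^(⌊log₂ n⌋+1)` is affine in `n` on each dyadic block
`[2^j, 2^(j+1)]`, endpoints included: there `f n = n * j + 2n - 2^(j+1)`. For `n ≥ 2` both halves
`⌊n/2⌋` and `⌈n/2⌉` lie in the block one level below that of `n`, so adding the two affine
expressions and `n` gives back `f n`. The recurrence determines `d` from `d 1`, hence `d = f`. -/

theorem eq_of_halving_recurrence {d e : ℕ → ℕ} (g : ℕ → ℕ) (h1 : d 1 = e 1)
    (hd : ∀ n, 2 ≤ n → d n = d (n / 2) + d ((n + 1) / 2) + g n)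
    (he : ∀ n, 2 ≤ n → e n = e (n / 2) + e ((n + 1) / 2) + g n) :
    ∀ n, 1 ≤ n → d n = e n := by
  intro n
  induction n using Nat.strong_induction_on with
  | _ n ih =>
    intro hn
    rcases hn.eq_or_lt with rfl | hn
    · exact h1
    · rw [hd n hn, he n hn, ih (n / 2) (by omega) (by omega), ih ((n + 1) / 2) (by omega) (by omega)]

/-- The subtraction never truncates, since `2^⌊log₂ n⌋ ≤ n`. -/
def divideConquerCost (n : ℕ) : ℕ := n * Nat.log 2 n + 2 * n - 2 ^ (Nat.log 2 n + 1)

theorem divideConquerCost_of_pow_le_of_le {j m : ℕ} (hlo : 2 ^ j ≤ m) (hhi : m ≤ 2 ^ (j + 1)) :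
    divideConquerCost m = m * j + 2 * m - 2 ^ (j + 1) := by
  rcases hhi.lt_or_eq with hlt | rfl
  · rw [divideConquerCost, Nat.log_eq_of_pow_le_of_lt_pow hlo hlt]
  · rw [divideConquerCost, Nat.log_pow one_lt_two, pow_succ 2 (j + 1), mul_add_one]
    omega

theorem divideConquerCost_rec {n : ℕ} (hn : 2 ≤ n) :
    divideConquerCost n =
      divideConquerCost (n / 2) + divideConquerCost ((n + 1) / 2) + n := by
  obtain ⟨j, hj⟩ : ∃ j, Nat.log 2 n = j + 1 :=
    Nat.exists_eq_add_one.mpr (Nat.log_pos one_lt_two hn)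
  have hlo : 2 ^ (j + 1) ≤ n := hj ▸ Nat.pow_log_le_self 2 (by omega)
  have hhi : n < 2 ^ (j + 1 + 1) := hj ▸ Nat.lt_pow_succ_log_self one_lt_two n
  rw [pow_succ 2 (j + 1)] at hhi
  rw [pow_succ] at hlo
  have hsum : n / 2 * j + (n + 1) / 2 * j = n * j := by
    rw [← add_mul]; congr 1; omega
  rw [divideConquerCost_of_pow_le_of_le (j := j + 1) (by omega) (by omega),
    divideConquerCost_of_pow_le_of_le (j := j) (m := n / 2) (by omega) (by omega),
    divideConquerCost_of_pow_le_of_le (j := j) (m := (n + 1) / 2) (by omega) (by omega),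
    pow_succ 2 (j + 1), pow_succ 2 j, mul_add_one]
  omega

/-- The Divide and Conquer recurrence d(1)=0,
d(n)=d(⌊n/2⌋)+d(⌈n/2⌉)+n has closed form d(n) = n⌊log₂ n⌋ + 2n − 2^{⌊log₂ n⌋+1}. -/
theorem divide_and_conquer_closed_form
    (d : ℕ → ℕ)
    (h1 : d 1 = 0)
    (hrec : ∀ n, 2 ≤ n → d n = d (n / 2) + d ((n + 1) / 2) + n) :
    ∀ n, 1 ≤ n → d n = n * Nat.log 2 n + 2 * n - 2 ^ (Nat.log 2 n + 1) :=
  eq_of_halving_recurrence id (by rw [h1]; rfl) hrec fun _ => divideConquerCost_rec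
end

section
/- For all integers n ≥ 5, ⌈n²/2⌉ + 1 > n·⌊log₂ n⌋ + 2n − 2^{⌊log₂ n⌋+1}; that is, the DGEF of the new protocol exceeds the DGEF of the Divide and Conquer protocol. -/
/-!
Write `k = ⌊log₂ n⌋`. Since `n < 2^(k+1)`, the Divide and Conquer value is below `n (k + 1)`,
and `n (k + 1) ≤ n² / 2` as soon as `2k + 2 ≤ n`, which holds for every `n ≥ 6`.
The case `n = 5` is checked directly.
-/

lemma two_mul_add_two_le_two_pow {k : ℕ} (hk : 3 ≤ k) : 2 * k + 2 ≤ 2 ^ k := by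
  induction k, hk using Nat.le_induction with
  | base => norm_num
  | succ k _ ih => rw [pow_succ]; omega

lemma two_mul_log_two_add_two_le {n : ℕ} (hn : 6 ≤ n) : 2 * Nat.log 2 n + 2 ≤ n := by
  have hlog : 2 ≤ Nat.log 2 n := Nat.le_log_of_pow_le one_lt_two (by omega)
  rcases hlog.eq_or_lt with hk | hk
  · omega
  · exact (two_mul_add_two_le_two_pow hk).trans (Nat.pow_log_le_self 2 (by omega))

lemma mul_log_two_add_two_mul_sub_lt {n : ℕ} (hn : n ≠ 0) :
    n * Nat.log 2 n + 2 * n - 2 ^ (Nat.log 2 n + 1) < n * (Nat.log 2 n + 1) := by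
  have := Nat.lt_pow_succ_log_self one_lt_two n
  rw [mul_add_one]
  omega

lemma mul_add_one_le_sq_add_one_div_two {n k : ℕ} (h : 2 * k + 2 ≤ n) :
    n * (k + 1) ≤ (n ^ 2 + 1) / 2 := by
  rw [Nat.le_div_iff_mul_le two_pos, sq]
  nlinarith

/-- For n ≥ 5, the DGEF ⌈n²/2⌉ + 1 of the new protocol exceeds the
DGEF n⌊log₂ n⌋ + 2n − 2^{⌊log₂ n⌋+1} of the Divide and Conquer protocol. -/
theorem new_protocol_beats_divide_and_conquer (n : ℕ) (hn : 5 ≤ n) :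
    n * Nat.log 2 n + 2 * n - 2 ^ (Nat.log 2 n + 1) < (n ^ 2 + 1) / 2 + 1 := by
  obtain rfl | h6 := hn.eq_or_lt
  · decide
  calc n * Nat.log 2 n + 2 * n - 2 ^ (Nat.log 2 n + 1)
      < n * (Nat.log 2 n + 1) := mul_log_two_add_two_mul_sub_lt (by omega)
    _ ≤ (n ^ 2 + 1) / 2 := mul_add_one_le_sq_add_one_div_two (two_mul_log_two_add_two_le h6)
    _ < (n ^ 2 + 1) / 2 + 1 := Nat.lt_succ_self _
end

section
/- In the new protocol, if all players follow the rules, every player's final portion is worth at least 1/n of the whole cake according to his or her own measure: formally, if at each stage with s remaining players each remaining player values the current subcake C' at least s/n (of C), and a departing player receives a piece he values exactly 1/s of C', then every departing player's portion is worth at least (1/s)·(s/n) = 1/n of C, and the invariant v_i(C'') ≥ (s−2)/n is preserved for the next stage with s−2 players. -/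
section ProportionalShare

variable {K : Type*} [Field K] [LinearOrder K] [IsStrictOrderedRing K] {n s v : K}

theorem one_div_le_one_div_mul_of_div_le (hs : 0 < s) (hv : s / n ≤ v) :
    1 / n ≤ 1 / s * v :=
  calc 1 / n = 1 / s * (s / n) := by field_simp
    _ ≤ 1 / s * v := by gcongr

theorem sub_div_le_sub_mul_div_of_div_le {k : K} (hs : 0 < s) (hks : k ≤ s) (hv : s / n ≤ v) :
    (s - k) / n ≤ v - k * (v / s) :=
  calc (s - k) / n = (1 - k / s) * (s / n) := by field_simp
    _ ≤ (1 - k / s) * v := by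
      gcongr
      rwa [sub_nonneg, div_le_one hs]
    _ = v - k * (v / s) := by ring

end ProportionalShare

theorem proportionality_invariant_general
    (n s : ℕ) (hs : 2 ≤ s)
    (vRecC' vRemC' p1 p2 : ℝ)
    (hrec : vRecC' ≥ (s : ℝ) / n)
    (hrem : vRemC' ≥ (s : ℝ) / n)
    (hp1 : p1 ≤ vRemC' / s) (hp2 : p2 ≤ vRemC' / s) :
    (1 / (s : ℝ)) * vRecC' ≥ 1 / n ∧
    vRemC' - p1 - p2 ≥ ((s : ℝ) - 2) / n := by
  have hs' : (2 : ℝ) ≤ s := by exact_mod_cast hs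
  have hs0 : (0 : ℝ) < s := by linarith
  refine ⟨one_div_le_one_div_mul_of_div_le hs0 hrec, ?_⟩
  have hremaining := sub_div_le_sub_mul_div_of_div_le hs0 hs' hrem
  linarith

/-- Proportionality invariant of the new protocol. If with s
remaining players each remaining player values the current subcake C' at least
s/n, and a departing player receives a piece he values exactly (1/s)·v(C')
while every remaining player values each departing piece at most (1/s)·v(C'),
then the departing player's portion is worth at least 1/n of the cake, and the
invariant v(C'') ≥ (s−2)/n holds for the next stage with s−2 players. -/
theorem proportionality_invariant
    (n s : ℕ) (hn : 0 < n) (hs : 2 ≤ s) (hsn : s ≤ n)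
    (vRecC' vRemC' p1 p2 : ℝ)
    (hrec : vRecC' ≥ (s : ℝ) / n)
    (hrem : vRemC' ≥ (s : ℝ) / n)
    (hp1 : p1 ≤ vRemC' / s) (hp2 : p2 ≤ vRemC' / s) :
    (1 / (s : ℝ)) * vRecC' ≥ 1 / n ∧
    vRemC' - p1 - p2 ≥ ((s : ℝ) - 2) / n :=
  proportionality_invariant_general n s hs vRecC' vRemC' p1 p2 hrec hrem hp1 hp2
end
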